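/- If n camera matrices all share a common line through their camera centers (equivalently, some nonzero Plücker vector x ∈ ℝ^6 lies in the kernel of every line projection matrix S(P_i)), then the stacked line projection matrix 𝒫 ∈ ℝ^{3n×6} has rank at most 5; conversely, if the cameras are not collinear and each S(P_i) has kernel exactly the lines through the center of P_i, then 𝒫 has rank 6. -/
import Mathlib


open Matrix

def pairs : Fin 6 → Fin 4 × Fin 4 := ![(0,1),(0,2),(0,3),(1,2),(1,3),(2,3)]

noncomputable def lineProj (A : Matrix (Fin 3) (Fin 4) ℝ) : Matrix (Fin 3) (Fin 6) ℝ :=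
  fun w s => (-1 : ℝ) ^ (w : ℕ) *
    (A (w.succAbove 0) (pairs s).1 * A (w.succAbove 1) (pairs s).2
      - A (w.succAbove 0) (pairs s).2 * A (w.succAbove 1) (pairs s).1)

/-- Plücker coordinates of the line through two points of projective 3-space. -/
def plucker (y z : Fin 4 → ℝ) : Fin 6 → ℝ :=
  fun s => y (pairs s).1 * z (pairs s).2 - y (pairs s).2 * z (pairs s).1

/-- The wedge `v ∧ x` of a vector with a 2-form, as an element of `∧³ℝ⁴ ≅ ℝ⁴`. -/
def wedge3 (v : Fin 4 → ℝ) (x : Fin 6 → ℝ) : Fin 4 → ℝ :=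
  ![v 1 * x 5 - v 2 * x 4 + v 3 * x 3,
    v 0 * x 5 - v 2 * x 2 + v 3 * x 1,
    v 0 * x 4 - v 1 * x 2 + v 3 * x 0,
    v 0 * x 3 - v 1 * x 1 + v 2 * x 0]

@[simp] lemma pairs0 : pairs 0 = (0,1) := rfl
@[simp] lemma pairs1 : pairs 1 = (0,2) := rfl
@[simp] lemma pairs2 : pairs 2 = (0,3) := rfl
@[simp] lemma pairs3 : pairs 3 = (1,2) := rfl
@[simp] lemma pairs4 : pairs 4 = (1,3) := rfl
@[simp] lemma pairs5 : pairs 5 = (2,3) := rfl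

@[simp] lemma plucker_apply (y z : Fin 4 → ℝ) (s : Fin 6) :
    plucker y z s = y (pairs s).1 * z (pairs s).2 - y (pairs s).2 * z (pairs s).1 := rfl

@[simp] lemma fin4_mk2 (h : 2 < 4) : (⟨2, h⟩ : Fin 4) = 2 := rfl
@[simp] lemma fin4_mk3 (h : 3 < 4) : (⟨3, h⟩ : Fin 4) = 3 := rfl
@[simp] lemma fin6_mk2 (h : 2 < 6) : (⟨2, h⟩ : Fin 6) = 2 := rfl
@[simp] lemma fin6_mk3 (h : 3 < 6) : (⟨3, h⟩ : Fin 6) = 3 := rfl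
@[simp] lemma fin6_mk4 (h : 4 < 6) : (⟨4, h⟩ : Fin 6) = 4 := rfl
@[simp] lemma fin6_mk5 (h : 5 < 6) : (⟨5, h⟩ : Fin 6) = 5 := rfl

lemma wedge3_self (v w : Fin 4 → ℝ) (t : Fin 4) : wedge3 v (plucker v w) t = 0 := by
  fin_cases t <;> simp [wedge3] <;> ring

lemma plucker_pair_indep (a b : Fin 4 → ℝ) (s0 : Fin 6) (hx : plucker a b s0 ≠ 0) :
    LinearIndependent ℝ ![a, b] := by
  rw [LinearIndependent.pair_iff]
  intro s t h
  have hi := congrFun h (pairs s0).1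
  have hj := congrFun h (pairs s0).2
  simp only [Pi.add_apply, Pi.smul_apply, smul_eq_mul, Pi.zero_apply] at hi hj
  constructor
  · have hs : s * plucker a b s0 = 0 := by
      simp only [plucker_apply]
      linear_combination b (pairs s0).2 * hi - b (pairs s0).1 * hj
    rcases mul_eq_zero.1 hs with h' | h'
    · exact h'
    · exact absurd h' hx
  · have ht : t * plucker a b s0 = 0 := by
      simp only [plucker_apply]
      linear_combination a (pairs s0).1 * hj - a (pairs s0).2 * hi
    rcases mul_eq_zero.1 ht with h' | h'
    · exact h'
    · exact absurd h' hx

set_option maxHeartbeats 2000000 in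
lemma mem_span_exists (a b v : Fin 4 → ℝ) (s0 : Fin 6)
    (hw : ∀ t, wedge3 v (plucker a b) t = 0) :
    ∃ α β : ℝ, α • a + β • b = (plucker a b s0) • v := by
  have h0 := hw 0
  have h1 := hw 1
  have h2 := hw 2
  have h3 := hw 3
  simp [wedge3] at h0 h1 h2 h3
  refine ⟨v (pairs s0).1 * b (pairs s0).2 - v (pairs s0).2 * b (pairs s0).1,
          v (pairs s0).2 * a (pairs s0).1 - v (pairs s0).1 * a (pairs s0).2, ?_⟩
  funext k
  fin_cases s0 <;> fin_cases k <;>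
    simp only [plucker_apply, Pi.add_apply, Pi.smul_apply, smul_eq_mul,
      Fin.mk_zero, Fin.mk_one, fin4_mk2, fin4_mk3, fin6_mk2, fin6_mk3, fin6_mk4, fin6_mk5,
      pairs0, pairs1, pairs2, pairs3, pairs4, pairs5, Fin.isValue] <;>
    first
      | ring1
      | (linear_combination h0; done)
      | (linear_combination -h0; done)
      | (linear_combination h1; done)
      | (linear_combination -h1; done)
      | (linear_combination h2; done)
      | (linear_combination -h2; done)
      | (linear_combination h3; done)
      | (linear_combination -h3; done)

lemma mem_span_of_wedge (a b v : Fin 4 → ℝ) (s0 : Fin 6) (hx : plucker a b s0 ≠ 0)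
    (hw : ∀ t, wedge3 v (plucker a b) t = 0) :
    v ∈ Submodule.span ℝ ({a, b} : Set (Fin 4 → ℝ)) := by
  obtain ⟨α, β, hαβ⟩ := mem_span_exists a b v s0 hw
  have hv : v = (plucker a b s0)⁻¹ • ((plucker a b s0) • v) := by
    rw [smul_smul, inv_mul_cancel₀ hx, one_smul]
  rw [hv, ← hαβ]
  refine Submodule.smul_mem _ _ (Submodule.add_mem _ ?_ ?_)
  · exact Submodule.smul_mem _ _ (Submodule.subset_span (by simp))
  · exact Submodule.smul_mem _ _ (Submodule.subset_span (by simp))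

lemma single_pair_indep : LinearIndependent ℝ
    ![(Pi.single 0 1 : Fin 4 → ℝ), (Pi.single 1 1 : Fin 4 → ℝ)] := by
  rw [LinearIndependent.pair_iff]
  intro s t h
  have h0 := congrFun h 0
  have h1 := congrFun h 1
  simp [Pi.single_apply] at h0 h1
  exact ⟨h0, h1⟩

theorem stmt8 (n : ℕ) (P : Fin n → Matrix (Fin 3) (Fin 4) ℝ) (c : Fin n → Fin 4 → ℝ)
    (hc0 : ∀ i, c i ≠ 0) (hcc : ∀ i, P i *ᵥ c i = 0)
    (Pstack : Matrix (Fin n × Fin 3) (Fin 6) ℝ)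
    (hPs : ∀ p s, Pstack p s = lineProj (P p.1) p.2 s) :
    ((∃ x : Fin 6 → ℝ, x ≠ 0 ∧ ∀ i, lineProj (P i) *ᵥ x = 0) → Pstack.rank ≤ 5) ∧
    ((¬ ∃ y z : Fin 4 → ℝ, LinearIndependent ℝ ![y, z] ∧
        ∀ i, c i ∈ Submodule.span ℝ ({y, z} : Set (Fin 4 → ℝ))) →
      (∀ i (x : Fin 6 → ℝ), lineProj (P i) *ᵥ x = 0 ↔ ∃ y, x = plucker (c i) y) →
      Pstack.rank = 6) := by
  have hstack : ∀ x : Fin 6 → ℝ, Pstack *ᵥ x = 0 ↔ ∀ i, lineProj (P i) *ᵥ x = 0 := by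
    intro x
    constructor
    · intro h i
      funext w
      have := congrFun h (i, w)
      simpa [Matrix.mulVec, dotProduct, hPs] using this
    · intro h
      funext p
      have := congrFun (h p.1) p.2
      simpa [Matrix.mulVec, dotProduct, hPs] using this
  have hrn := LinearMap.finrank_range_add_finrank_ker Pstack.mulVecLin
  have hdom : Module.finrank ℝ (Fin 6 → ℝ) = 6 := by
    rw [Module.finrank_pi]; simp
  rw [hdom] at hrn
  have hrank : Pstack.rank = Module.finrank ℝ (LinearMap.range Pstack.mulVecLin) := rfl
  constructor
  · rintro ⟨x, hx0, hxk⟩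
    have hker : x ∈ LinearMap.ker Pstack.mulVecLin := by
      rw [LinearMap.mem_ker, Matrix.mulVecLin_apply]
      exact (hstack x).2 hxk
    have hne : LinearMap.ker Pstack.mulVecLin ≠ ⊥ := by
      intro hb
      rw [hb, Submodule.mem_bot] at hker
      exact hx0 hker
    have hpos : Module.finrank ℝ (LinearMap.ker Pstack.mulVecLin) ≠ 0 := by
      intro h
      exact hne (Submodule.finrank_eq_zero.1 h)
    rw [hrank]
    omega
  · intro hncol hker
    rcases Nat.eq_zero_or_pos n with hn | hn
    · exfalso
      apply hncol
      refine ⟨Pi.single 0 1, Pi.single 1 1, single_pair_indep, fun i => ?_⟩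
      exact absurd i.2 (by omega)
    · have hbot : LinearMap.ker Pstack.mulVecLin = ⊥ := by
        rw [Submodule.eq_bot_iff]
        intro x hx
        rw [LinearMap.mem_ker, Matrix.mulVecLin_apply] at hx
        by_contra hx0
        have hall : ∀ i, lineProj (P i) *ᵥ x = 0 := (hstack x).1 hx
        set i0 : Fin n := ⟨0, hn⟩
        obtain ⟨b, hb⟩ := (hker i0 x).1 (hall i0)
        obtain ⟨s0, hs0⟩ : ∃ s0, x s0 ≠ 0 := by
          by_contra h
          push_neg at h
          exact hx0 (funext h)
        rw [hb] at hs0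
        apply hncol
        refine ⟨c i0, b, plucker_pair_indep _ _ s0 hs0, fun i => ?_⟩
        obtain ⟨y, hy⟩ := (hker i x).1 (hall i)
        refine mem_span_of_wedge _ _ _ s0 hs0 fun t => ?_
        rw [← hb, hy]
        exact wedge3_self _ _ t
      rw [hrank]
      rw [hbot] at hrn
      simpa using hrn
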